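/- Under mutation by positive reflection, the net change Δ̄ in affine arc labels across each transformed mutant block is the negative of the original net change: Δ̄₁ = −Δ₁ and Δ̄₃ = −Δ₃; moreover the net changes across the two unaffected blocks are unchanged, and one always has Δ₁ = −Δ₃ and Δ₂ = −Δ₄. -/

import Mathlib

open scoped Classical
open LaurentPolynomial

noncomputable section

/-- One occurrence (letter) of a Gauss code: the name of the crossing, whether this
occurrence is the over-passage, and the sign of the crossing. -/
structure Occ (α : Type*) where
  crossing : α
  isOver : Bool
  sign : ℤ
deriving DecidableEq

namespace Occ

variable {α : Type*}

/-- Switch the over/under designation of an occurrence, keeping the crossing name and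
the sign. -/
def switchOU (o : Occ α) : Occ α := ⟨o.crossing, !o.isOver, o.sign⟩

/-- The change of the affine arc label when reading past this occurrence:
`o+ ↦ -1`, `u+ ↦ +1`, `o- ↦ +1`, `u- ↦ -1`. -/
def delta (o : Occ α) : ℤ := if o.isOver then -o.sign else o.sign

end Occ

namespace GaussCode

variable {α : Type*}

/-- A Gauss code is a list of occurrences (read from the basepoint).  `netChange B` is the
net change `Δ(B)` of the affine arc labels across the block `B`. -/
def netChange (B : List (Occ α)) : ℤ := (B.map Occ.delta).sum

/-- Switch the over/under data of every occurrence in a block. -/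
def switchBlock (B : List (Occ α)) : List (Occ α) := B.map Occ.switchOU

/-- The mutation by positive reflection of the Gauss code `B₁ ++ X ++ B₂ ++ Y` whose
mutant blocks (the two maximal subwords coming from the mutated tangle) are `B₁` and `B₂`:
the two mutant blocks are exchanged and the over/under data inside them is switched, all
signs kept. -/
def positiveReflection (B₁ X B₂ Y : List (Occ α)) : List (Occ α) :=
  switchBlock B₂ ++ X ++ switchBlock B₁ ++ Y

/-- The affine label of the arc just before the `k`-th letter of the code (the basepoint
arc is labeled `0`). -/
def prefixLabel (L : List (Occ α)) (k : ℕ) : ℤ := ((L.take k).map Occ.delta).sum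

variable [DecidableEq α]

/-- The index of the over-occurrence of the crossing `x` in the code `L`. -/
def overIdx (L : List (Occ α)) (x : α) : ℕ :=
  L.findIdx (fun o => decide (o.crossing = x) && o.isOver)

/-- The index of the under-occurrence of the crossing `x` in the code `L`. -/
def underIdx (L : List (Occ α)) (x : α) : ℕ :=
  L.findIdx (fun o => decide (o.crossing = x) && !o.isOver)

/-- The affine index weight `W(x)` of the crossing `x`: the difference of arc labels from
the over-occurrence to the under-occurrence ("outside difference" = "inside difference",
the two agreeing since the total label change around the circle is `0`). -/
def weight (L : List (Occ α)) (x : α) : ℤ :=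
  prefixLabel L (overIdx L x) - prefixLabel L (underIdx L x + 1)

/-- The set of crossings occurring in the code. -/
def crossings (L : List (Occ α)) : Finset α := (L.map Occ.crossing).toFinset

/-- The sign of the crossing `x` in the code `L`. -/
def signOf (L : List (Occ α)) (x : α) : ℤ :=
  (((L.find? (fun o => decide (o.crossing = x))).map Occ.sign).getD 0)

/-- The writhe: sum of the signs of the crossings. -/
def writhe (L : List (Occ α)) : ℤ := ∑ x ∈ crossings L, signOf L x

/-- The Affine Index Polynomial `W_K(t) = Σ_c sign(c) t^{W(c)} - writhe(K)` of a Gauss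
code. -/
def aip (L : List (Occ α)) : LaurentPolynomial ℤ :=
  (∑ x ∈ crossings L, C (signOf L x) * T (weight L x)) - C (writhe L)

/-- The block `B` consists of crossings from `S` (with signs given by `s`), each appearing
exactly twice in `B`, once as an over-occurrence and once as an under-occurrence. -/
def PairedIn (B : List (Occ α)) (S : Finset α) (s : α → ℤ) : Prop :=
  (B : Multiset (Occ α)) =
    ∑ x ∈ S, ({⟨x, true, s x⟩, ⟨x, false, s x⟩} : Multiset (Occ α))

end GaussCode

open GaussCode

namespace Occ

variable {α : Type*}

@[simp]
lemma delta_switchOU (o : Occ α) : o.switchOU.delta = -o.delta := by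
  cases o with
  | mk c isOver s => cases isOver <;> simp [switchOU, delta]

end Occ

namespace GaussCode

variable {α : Type*}

@[simp]
lemma netChange_append (A B : List (Occ α)) :
    netChange (A ++ B) = netChange A + netChange B := by
  simp [netChange]

lemma netChange_switchBlock (B : List (Occ α)) :
    netChange (switchBlock B) = -netChange B := by
  simpa [netChange, switchBlock, Function.comp_def] using
    (map_list_sum (negAddMonoidHom : ℤ →+ ℤ) (B.map Occ.delta)).symm

/-- Each crossing contributes `-s` at its over- and `+s` at its under-occurrence. -/
lemma netChange_eq_zero_of_pairedIn [DecidableEq α] {B : List (Occ α)} {S : Finset α}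
    {s : α → ℤ} (h : PairedIn B S s) : netChange B = 0 := by
  have hB : netChange B = ((B : Multiset (Occ α)).map Occ.delta).sum := by simp [netChange]
  rw [hB, h, ← Multiset.coe_mapAddMonoidHom, ← Multiset.coe_sumAddMonoidHom,
    ← AddMonoidHom.comp_apply, map_sum]
  exact Finset.sum_eq_zero fun x _ => by simp [Occ.delta]

end GaussCode

/-- For a Gauss code `B₁ ++ X ++ B₂ ++ Y` (mutant blocks `B₁`, `B₂` with net
affine-label changes `Δ₁ = netChange B₁`, `Δ₃ = netChange B₂`; complementary blocks `X`,
`Y` with net changes `Δ₂ = netChange X`, `Δ₄ = netChange Y`), under mutation by positive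
reflection — which exchanges the mutant blocks and switches o↔u inside them, keeping
signs, so that the mutated code is `switchBlock B₂ ++ X ++ switchBlock B₁ ++ Y`, the
unaffected blocks `X`, `Y` (and hence their net changes) being untouched — the net change
across each transformed mutant block is the negative of the original
(`Δ̄₁ = -Δ₁`, `Δ̄₃ = -Δ₃`); moreover `Δ₁ = -Δ₃` and `Δ₂ = -Δ₄`.  The hypotheses record
that every crossing met in the mutant tangle has both its occurrences (one over, one
under, equal signs) in `B₁ ++ B₂`, and likewise for the crossings outside the tangle in
`X ++ Y`. -/
theorem positiveReflection_netChanges {α : Type*} (B₁ X B₂ Y : List (Occ α))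
    (S₁ S₂ : Finset α) (s₁ s₂ : α → ℤ)
    (h₁ : PairedIn (B₁ ++ B₂) S₁ s₁)
    (h₂ : PairedIn (X ++ Y) S₂ s₂) :
    positiveReflection B₁ X B₂ Y = switchBlock B₂ ++ X ++ switchBlock B₁ ++ Y ∧
    netChange (switchBlock B₁) = - netChange B₁ ∧
    netChange (switchBlock B₂) = - netChange B₂ ∧
    netChange B₁ = - netChange B₂ ∧
    netChange X = - netChange Y := by
  have hB := netChange_eq_zero_of_pairedIn h₁
  have hXY := netChange_eq_zero_of_pairedIn h₂
  rw [netChange_append] at hB hXY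
  exact ⟨rfl, netChange_switchBlock B₁, netChange_switchBlock B₂, by omega, by omega⟩
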